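/- arXiv:1603.02185 — 3 statements merged into one kernel-verified Lean document; each statement's English description precedes it below -/
import Mathlib

section
/- Let x > 0 and let ε_0, ε_1, ε_2, … be a sequence of nonnegative reals such that ε_{t+1} ≤ ε_t − x·ε_t² for all t. Then for any ε > 0 and any positive integer t with t ≥ ⌈1/(x·ε)⌉, we have ε_t ≤ ε. -/
/-!
The map `f u = u - x u²` is increasing on `u ≤ 1 / (2x)` and sends `1 / (x n)` below
`1 / (x (n + 1))`, because `(n - 1)(n + 1) ≤ n²`. Since `ε₁ ≤ f ε₀ ≤ 1 / (4x)`, induction gives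
`ε_t ≤ 1 / (x (t + 1)) < 1 / (x t)` for `t ≥ 1`, and `1 / (x t) ≤ ε` once `t ≥ 1 / (x ε)`.
-/

theorem sub_mul_sq_le_sub_mul_sq {x u v : ℝ} (huv : u ≤ v) (h : x * (u + v) ≤ 1) :
    u - x * u ^ 2 ≤ v - x * v ^ 2 := by
  nlinarith [mul_nonneg (sub_nonneg.2 huv) (sub_nonneg.2 h)]

theorem sub_mul_sq_le_one_div_four_mul {x : ℝ} (hx : 0 < x) (u : ℝ) :
    u - x * u ^ 2 ≤ 1 / (4 * x) := by
  rw [le_div_iff₀ (by positivity)]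
  nlinarith [sq_nonneg (2 * x * u - 1)]

theorem one_div_mul_sub_mul_sq_le {x n : ℝ} (hx : 0 < x) (hn : 0 < n) :
    1 / (x * n) - x * (1 / (x * n)) ^ 2 ≤ 1 / (x * (n + 1)) := by
  have hfn : 1 / (x * n) - x * (1 / (x * n)) ^ 2 = (n - 1) / (x * n ^ 2) := by
    field_simp
  rw [hfn, div_le_div_iff₀ (by positivity) (by positivity)]
  nlinarith [mul_pos hx (mul_pos hn hn)]

theorem le_one_div_mul_succ_of_le_sub_mul_sq {x : ℝ} (hx : 0 < x) {e : ℕ → ℝ}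
    (hrec : ∀ t, e (t + 1) ≤ e t - x * e t ^ 2) {t : ℕ} (ht : 0 < t) :
    e t ≤ 1 / (x * (t + 1)) := by
  induction t, ht using Nat.le_induction with
  | base =>
    calc e 1 ≤ e 0 - x * e 0 ^ 2 := hrec 0
      _ ≤ 1 / (4 * x) := sub_mul_sq_le_one_div_four_mul hx _
      _ ≤ 1 / (x * ((1 : ℕ) + 1)) := by
        rw [div_le_div_iff₀ (by positivity) (by positivity)]; push_cast; linarith
  | succ t ht ih =>
    have ht' : (1 : ℝ) ≤ t := by exact_mod_cast ht
    have hmono : x * (e t + 1 / (x * (t + 1))) ≤ 1 := by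
      have hsum : x * (2 * (1 / (x * (t + 1)))) = 2 / (t + 1) := by field_simp
      calc x * (e t + 1 / (x * (t + 1))) ≤ x * (2 * (1 / (x * (t + 1)))) := by
            gcongr; linarith
        _ ≤ 1 := by rw [hsum, div_le_one (by positivity)]; linarith
    calc e (t + 1) ≤ e t - x * e t ^ 2 := hrec t
      _ ≤ 1 / (x * (t + 1)) - x * (1 / (x * (t + 1))) ^ 2 := sub_mul_sq_le_sub_mul_sq ih hmono
      _ ≤ 1 / (x * ((t + 1 : ℕ) + 1)) := by
        push_cast; exact one_div_mul_sub_mul_sq_le hx (by positivity)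

theorem recursion_lemma_general (x : ℝ) (hx : 0 < x) (e : ℕ → ℝ)
    (hrec : ∀ t, e (t + 1) ≤ e t - x * (e t) ^ 2) :
    ∀ ε : ℝ, 0 < ε → ∀ t : ℕ, 0 < t → (⌈1 / (x * ε)⌉₊ : ℕ) ≤ t → e t ≤ ε := by
  intro ε hε t ht hceil
  have htpos : (0 : ℝ) < t := by exact_mod_cast ht
  have hlarge : 1 / (x * ε) ≤ t := Nat.ceil_le.mp hceil
  calc e t ≤ 1 / (x * (t + 1)) := le_one_div_mul_succ_of_le_sub_mul_sq hx hrec ht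
    _ ≤ 1 / (x * t) := by gcongr; linarith
    _ ≤ ε := by
      rw [div_le_iff₀ (by positivity)] at hlarge ⊢
      linarith

/-- Recursion lemma (Lemma B.2 of Shalev-Shwartz, Srebro, Zhang 2010): if
`ε_{t+1} ≤ ε_t − x·ε_t²` for a nonnegative sequence and `x > 0`, then
`ε_t ≤ ε` for every positive integer `t ≥ ⌈1/(x·ε)⌉`. -/
theorem recursion_lemma (x : ℝ) (hx : 0 < x) (e : ℕ → ℝ)
    (hnonneg : ∀ t, 0 ≤ e t)
    (hrec : ∀ t, e (t + 1) ≤ e t - x * (e t) ^ 2) :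
    ∀ ε : ℝ, 0 < ε → ∀ t : ℕ, 0 < t → (⌈1 / (x * ε)⌉₊ : ℕ) ≤ t → e t ≤ ε :=
  recursion_lemma_general x hx e hrec
end

section
/- Let X = U·Σ·Vᵀ be a singular value decomposition of X ∈ ℝ^{p×m} and let λ > 0. Then the matrix W = U·(Σ − (λ/2)·I)_+·Vᵀ, where (x)_+ = max(x, 0) is applied entrywise to the diagonal, is the unique minimizer of W ↦ ‖W − X‖_F² + λ·‖W‖_* over all p×m matrices. -/
/-!
Both `frobNormSq` and `nuclearNorm` are invariant under `A ↦ U * A * Vᵀ` (for the nuclear norm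
because `(U A Vᵀ)ᵀ (U A Vᵀ) = V (Aᵀ A) Vᵀ` has the characteristic polynomial of `Aᵀ A`), so one may
assume `X = S` is diagonal. Testing `Z` against the contraction `C = diag (sign Z_ii)` in an
orthonormal eigenbasis of `Zᵀ Z` gives `∑ |Z_ii| ≤ ‖Z‖_*`, with equality for nonnegative diagonal
matrices. Hence the objective dominates a separable function of the entries, and the
one-dimensional soft-thresholding inequality, summed over the entries, gives the quadratic growth
`F W + ‖Z - W‖_F² ≤ F Z` of the objective `F`. Minimality and uniqueness follow at once.
-/

open Matrix

/-- Frobenius norm squared. -/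
noncomputable def frobNormSq {p m : ℕ} (A : Matrix (Fin p) (Fin m) ℝ) : ℝ :=
  ∑ i, ∑ j, (A i j) ^ 2

/-- Nuclear norm: sum of singular values. -/
noncomputable def nuclearNorm {p m : ℕ} (A : Matrix (Fin p) (Fin m) ℝ) : ℝ :=
  ∑ i, Real.sqrt ((Matrix.isHermitian_conjTranspose_mul_self A).eigenvalues i)

lemma Fin.sum_eq_dite_of_eq_zero_of_val_ne {M : Type*} [AddCommMonoid M] {n k : ℕ}
    {g : Fin n → M} (hg : ∀ i : Fin n, (i : ℕ) ≠ k → g i = 0) :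
    ∑ i, g i = if h : k < n then g ⟨k, h⟩ else 0 := by
  split_ifs with h
  · exact Finset.sum_eq_single _ (fun i _ hi => hg i fun h' => hi (Fin.ext h')) (by simp)
  · exact Finset.sum_eq_zero fun i _ => hg i fun h' => h (h' ▸ i.isLt)

lemma Fin.sq_sum_eq_sum_sq_of_eq_zero_of_val_ne {n k : ℕ} {g : Fin n → ℝ}
    (hg : ∀ i : Fin n, (i : ℕ) ≠ k → g i = 0) : (∑ i, g i) ^ 2 = ∑ i, g i ^ 2 := by
  rw [Fin.sum_eq_dite_of_eq_zero_of_val_ne hg,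
    Fin.sum_eq_dite_of_eq_zero_of_val_ne (k := k) (g := fun i => g i ^ 2)
      fun i hi => by simp [hg i hi]]
  by_cases h : k < n <;> simp [h]

namespace Matrix

lemma transpose_mul_self_mul_mul_transpose {l m n R : Type*} [Fintype l] [Fintype m]
    [Fintype n] [DecidableEq m] [CommSemiring R] (A : Matrix m n R) (U : Matrix l m R)
    (V : Matrix n n R) (hU : Uᵀ * U = 1) : (U * A * Vᵀ)ᵀ * (U * A * Vᵀ) = V * (Aᵀ * A) * Vᵀ := by
  simp only [transpose_mul, transpose_transpose, Matrix.mul_assoc]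
  rw [← Matrix.mul_assoc Uᵀ U, hU, Matrix.one_mul]

lemma dotProduct_transpose_mul_mulVec {m n R : Type*} [Fintype m] [Fintype n]
    [CommSemiring R] (C Z : Matrix m n R) (v : n → R) :
    v ⬝ᵥ (Cᵀ * Z) *ᵥ v = C *ᵥ v ⬝ᵥ Z *ᵥ v := by
  rw [← mulVec_mulVec, dotProduct_mulVec, vecMul_transpose]

lemma trace_eq_sum_dotProduct_mulVec {n R : Type*} [Fintype n] [DecidableEq n] [CommRing R]
    (M B : Matrix n n R) (hB : B * Bᵀ = 1) : M.trace = ∑ j, Bᵀ j ⬝ᵥ M *ᵥ Bᵀ j := by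
  calc M.trace = (M * B * Bᵀ).trace := by rw [Matrix.mul_assoc, hB, Matrix.mul_one]
    _ = (Bᵀ * M * B).trace := by rw [trace_mul_cycle]
    _ = ∑ j, Bᵀ j ⬝ᵥ M *ᵥ Bᵀ j := by simp only [trace, diag, mul_mul_apply]

lemma dotProduct_le_sqrt_mul_sqrt {n : Type*} [Fintype n] (v w : n → ℝ) :
    v ⬝ᵥ w ≤ √(v ⬝ᵥ v) * √(w ⬝ᵥ w) := by
  simpa only [dotProduct, sq] using Real.sum_mul_le_sqrt_mul_sqrt Finset.univ v w

lemma IsHermitian.sum_comp_eigenvalues_of_eq_diagonal {n : Type*} [Fintype n] [DecidableEq n]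
    {A : Matrix n n ℝ} (hA : A.IsHermitian) {d : n → ℝ} (h : A = diagonal d) (f : ℝ → ℝ) :
    ∑ i, f (hA.eigenvalues i) = ∑ i, f (d i) := by
  have hroots : Finset.univ.val.map hA.eigenvalues = Finset.univ.val.map d := by
    have := hA.roots_charpoly_eq_eigenvalues
    have hchar : A.charpoly =
        (Finset.univ.val.map d |>.map fun a => Polynomial.X - Polynomial.C a).prod := by
      rw [h, charpoly_diagonal, Finset.prod_eq_multiset_prod, Multiset.map_map]; rfl
    rw [hchar, Polynomial.roots_multiset_prod_X_sub_C] at this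
    simpa using this.symm
  have := congrArg (fun s => (s.map f).sum) hroots
  simpa only [Multiset.map_map, Finset.sum_eq_multiset_sum, Function.comp_def] using this

variable {p m : ℕ}

def IsRectDiag {α : Type*} [Zero α] (D : Matrix (Fin p) (Fin m) α) : Prop :=
  ∀ (i : Fin p) (j : Fin m), (i : ℕ) ≠ (j : ℕ) → D i j = 0

lemma IsRectDiag.transpose_mul_self {D : Matrix (Fin p) (Fin m) ℝ} (hD : D.IsRectDiag) :
    Dᵀ * D = diagonal fun j => (∑ i, D i j) ^ 2 := by
  ext j k
  rw [mul_apply]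
  by_cases hjk : j = k
  · subst hjk
    rw [diagonal_apply_eq, Fin.sq_sum_eq_sum_sq_of_eq_zero_of_val_ne fun i hi => hD i j hi]
    simp [sq]
  · rw [diagonal_apply_ne _ hjk]
    refine Finset.sum_eq_zero fun i _ => ?_
    by_cases hij : (i : ℕ) = j
    · rw [hD i k fun hik => hjk (Fin.ext (hij.symm.trans hik)), mul_zero]
    · rw [transpose_apply, hD i j hij, zero_mul]

lemma IsRectDiag.mulVec_dotProduct_le {C : Matrix (Fin p) (Fin m) ℝ} (hC : C.IsRectDiag)
    (hCle : ∀ i j, |C i j| ≤ 1) (v : Fin m → ℝ) : C *ᵥ v ⬝ᵥ C *ᵥ v ≤ v ⬝ᵥ v := by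
  have hrow : ∀ i, (C *ᵥ v) i ^ 2 = ∑ j, C i j ^ 2 * v j ^ 2 := fun i => by
    rw [mulVec, dotProduct, Fin.sq_sum_eq_sum_sq_of_eq_zero_of_val_ne
      fun j hj => by rw [hC i j (Ne.symm hj), zero_mul]]
    simp only [mul_pow]
  have hcol : ∀ j, ∑ i, C i j ^ 2 ≤ 1 := fun j => by
    rw [Fin.sum_eq_dite_of_eq_zero_of_val_ne (k := j) (g := fun i => C i j ^ 2)
      fun i hi => by simp [hC i j hi]]
    split_ifs
    · exact sq_le_one_iff_abs_le_one _ |>.mpr (hCle _ _)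
    · exact zero_le_one
  calc C *ᵥ v ⬝ᵥ C *ᵥ v = ∑ i, (C *ᵥ v) i ^ 2 := by simp only [dotProduct, sq]
    _ = ∑ j, (∑ i, C i j ^ 2) * v j ^ 2 := by
      simp only [hrow, Finset.sum_mul]
      exact Finset.sum_comm
    _ ≤ ∑ j, v j ^ 2 :=
      Finset.sum_le_sum fun j _ => mul_le_of_le_one_left (sq_nonneg _) (hcol j)
    _ = v ⬝ᵥ v := by simp only [dotProduct, sq]

def shrink (τ : ℝ) (S : Matrix (Fin p) (Fin m) ℝ) : Matrix (Fin p) (Fin m) ℝ :=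
  Matrix.of fun i j => max (S i j - τ) 0

end Matrix

section Norms

variable {p m : ℕ}

lemma frobNormSq_nonneg (A : Matrix (Fin p) (Fin m) ℝ) : 0 ≤ frobNormSq A :=
  Finset.sum_nonneg fun _ _ => Finset.sum_nonneg fun _ _ => sq_nonneg _

lemma frobNormSq_eq_zero_iff {A : Matrix (Fin p) (Fin m) ℝ} : frobNormSq A = 0 ↔ A = 0 := by
  simp [frobNormSq, Finset.sum_eq_zero_iff_of_nonneg, Finset.sum_nonneg, sq_nonneg,
    ← Matrix.ext_iff]

lemma frobNormSq_eq_trace (A : Matrix (Fin p) (Fin m) ℝ) : frobNormSq A = (Aᵀ * A).trace := by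
  rw [frobNormSq, trace, Finset.sum_comm]
  simp [mul_apply, sq]

lemma frobNormSq_mul_mul_transpose {q : ℕ} (A : Matrix (Fin p) (Fin m) ℝ)
    (U : Matrix (Fin q) (Fin p) ℝ) (V : Matrix (Fin m) (Fin m) ℝ) (hU : Uᵀ * U = 1)
    (hV : Vᵀ * V = 1) : frobNormSq (U * A * Vᵀ) = frobNormSq A := by
  rw [frobNormSq_eq_trace, frobNormSq_eq_trace, transpose_mul_self_mul_mul_transpose A U V hU,
    trace_mul_cycle, hV, Matrix.one_mul]

lemma nuclearNorm_eq_of_charpoly_eq {q : ℕ} {A : Matrix (Fin p) (Fin m) ℝ}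
    {B : Matrix (Fin q) (Fin m) ℝ} (h : (Aᴴ * A).charpoly = (Bᴴ * B).charpoly) :
    nuclearNorm A = nuclearNorm B := by
  rw [nuclearNorm, nuclearNorm,
    (IsHermitian.eigenvalues_eq_eigenvalues_iff _ _).mpr h]

lemma nuclearNorm_mul_mul_transpose {q : ℕ} (A : Matrix (Fin p) (Fin m) ℝ)
    (U : Matrix (Fin q) (Fin p) ℝ) (V : Matrix (Fin m) (Fin m) ℝ) (hU : Uᵀ * U = 1)
    (hV : Vᵀ * V = 1) : nuclearNorm (U * A * Vᵀ) = nuclearNorm A := by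
  refine nuclearNorm_eq_of_charpoly_eq ?_
  simp only [conjTranspose_eq_transpose_of_trivial]
  rw [transpose_mul_self_mul_mul_transpose A U V hU, charpoly_mul_comm, ← Matrix.mul_assoc, hV,
    Matrix.one_mul]

lemma nuclearNorm_of_isRectDiag {D : Matrix (Fin p) (Fin m) ℝ} (hD : D.IsRectDiag)
    (hnn : ∀ i j, 0 ≤ D i j) : nuclearNorm D = ∑ i, ∑ j, D i j := by
  have hDD : Dᴴ * D = diagonal fun j => (∑ i, D i j) ^ 2 := by
    rw [conjTranspose_eq_transpose_of_trivial, hD.transpose_mul_self]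
  rw [nuclearNorm, IsHermitian.sum_comp_eigenvalues_of_eq_diagonal _ hDD]
  exact (Finset.sum_congr rfl fun j _ =>
    Real.sqrt_sq (Finset.sum_nonneg fun i _ => hnn i j)).trans Finset.sum_comm

theorem trace_transpose_mul_le_nuclearNorm (C Z : Matrix (Fin p) (Fin m) ℝ)
    (hC : ∀ v, C *ᵥ v ⬝ᵥ C *ᵥ v ≤ v ⬝ᵥ v) : (Cᵀ * Z).trace ≤ nuclearNorm Z := by
  set hH := isHermitian_conjTranspose_mul_self Z
  obtain ⟨B, hB, hBcol⟩ : ∃ B : Matrix (Fin m) (Fin m) ℝ,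
      B * Bᵀ = 1 ∧ ∀ j, Bᵀ j = ⇑(hH.eigenvectorBasis j) :=
    ⟨hH.eigenvectorUnitary, by
      simpa only [star_eq_conjTranspose, conjTranspose_eq_transpose_of_trivial] using
        mem_unitaryGroup_iff.mp hH.eigenvectorUnitary.2, fun _ => rfl⟩
  have hunit : ∀ j, Bᵀ j ⬝ᵥ Bᵀ j = 1 := fun j => by
    have := congrFun (congrFun (mul_eq_one_comm.mp hB : Bᵀ * B = 1) j) j
    rwa [mul_apply', one_apply_eq] at this
  have heig : ∀ j, Z *ᵥ Bᵀ j ⬝ᵥ Z *ᵥ Bᵀ j = hH.eigenvalues j := fun j => by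
    rw [← dotProduct_transpose_mul_mulVec, ← conjTranspose_eq_transpose_of_trivial Z, hBcol,
      hH.mulVec_eigenvectorBasis, ← hBcol, dotProduct_smul, hunit, smul_eq_mul, mul_one]
  rw [trace_eq_sum_dotProduct_mulVec _ B hB, nuclearNorm]
  refine Finset.sum_le_sum fun j _ => ?_
  calc Bᵀ j ⬝ᵥ (Cᵀ * Z) *ᵥ Bᵀ j = C *ᵥ Bᵀ j ⬝ᵥ Z *ᵥ Bᵀ j :=
        dotProduct_transpose_mul_mulVec C Z _
    _ ≤ √(C *ᵥ Bᵀ j ⬝ᵥ C *ᵥ Bᵀ j) * √(Z *ᵥ Bᵀ j ⬝ᵥ Z *ᵥ Bᵀ j) :=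
        dotProduct_le_sqrt_mul_sqrt _ _
    _ ≤ √(Bᵀ j ⬝ᵥ Bᵀ j) * √(hH.eigenvalues j) := by
        rw [heig]
        gcongr
        exact hC _
    _ = √(hH.eigenvalues j) := by rw [hunit, Real.sqrt_one, one_mul]

end Norms

lemma scalar_shrink_quadratic_growth {lam s : ℝ} (hlam : 0 < lam) (hs : 0 ≤ s) (t : ℝ) :
    (max (s - lam / 2) 0 - s) ^ 2 + lam * max (s - lam / 2) 0 + (t - max (s - lam / 2) 0) ^ 2 ≤
      (t - s) ^ 2 + lam * |t| := by
  rcases le_total (s - lam / 2) 0 with h | h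
  · rw [max_eq_right h]
    rcases abs_cases t with ⟨ha, _⟩ | ⟨ha, _⟩ <;> nlinarith
  · rw [max_eq_left h]
    rcases abs_cases t with ⟨ha, _⟩ | ⟨ha, _⟩ <;> nlinarith

theorem shrink_quadratic_growth_of_isRectDiag {p m : ℕ} {lam : ℝ} (hlam : 0 < lam)
    {S : Matrix (Fin p) (Fin m) ℝ} (hS : S.IsRectDiag) (hSnn : ∀ i j, 0 ≤ S i j)
    (Z : Matrix (Fin p) (Fin m) ℝ) :
    frobNormSq (S.shrink (lam / 2) - S) + lam * nuclearNorm (S.shrink (lam / 2)) +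
        frobNormSq (Z - S.shrink (lam / 2)) ≤
      frobNormSq (Z - S) + lam * nuclearNorm Z := by
  set W := S.shrink (lam / 2)
  have hW : W.IsRectDiag := fun i j h => by simp [W, shrink, hS i j h, (half_pos hlam).le]
  set C : Matrix (Fin p) (Fin m) ℝ :=
    of fun i j => if (i : ℕ) = (j : ℕ) then (SignType.sign (Z i j) : ℝ) else 0
  have hC : C.IsRectDiag := fun i j h => if_neg h
  have hCle : ∀ i j, |C i j| ≤ 1 := fun i j => by
    simp only [C, of_apply]
    split_ifs
    · rcases lt_trichotomy (Z i j) 0 with h | h | h <;> simp [h]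
    · simp
  have hCZ : ∑ i, ∑ j, C i j * Z i j ≤ nuclearNorm Z := by
    calc ∑ i, ∑ j, C i j * Z i j = (Cᵀ * Z).trace := by
          simp only [trace, diag_apply, mul_apply, transpose_apply]
          exact Finset.sum_comm
      _ ≤ nuclearNorm Z := trace_transpose_mul_le_nuclearNorm C Z (hC.mulVec_dotProduct_le hCle)
  have hentry : ∀ i j, (W i j - S i j) ^ 2 + lam * W i j + (Z i j - W i j) ^ 2 ≤
      (Z i j - S i j) ^ 2 + lam * (C i j * Z i j) := fun i j => by
    by_cases h : (i : ℕ) = (j : ℕ)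
    · simpa [W, shrink, C, h, sign_mul_self] using
        scalar_shrink_quadratic_growth hlam (hSnn i j) (Z i j)
    · simp [hS i j h, hW i j h, hC i j h]
  rw [nuclearNorm_of_isRectDiag hW fun _ _ => le_max_right _ _]
  calc frobNormSq (W - S) + lam * ∑ i, ∑ j, W i j + frobNormSq (Z - W)
      = ∑ i, ∑ j, ((W i j - S i j) ^ 2 + lam * W i j + (Z i j - W i j) ^ 2) := by
        simp only [frobNormSq, Matrix.sub_apply, Finset.sum_add_distrib, Finset.mul_sum]
    _ ≤ ∑ i, ∑ j, ((Z i j - S i j) ^ 2 + lam * (C i j * Z i j)) :=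
        Finset.sum_le_sum fun i _ => Finset.sum_le_sum fun j _ => hentry i j
    _ = frobNormSq (Z - S) + lam * ∑ i, ∑ j, C i j * Z i j := by
        simp only [frobNormSq, Matrix.sub_apply, Finset.sum_add_distrib, Finset.mul_sum]
    _ ≤ frobNormSq (Z - S) + lam * nuclearNorm Z := by gcongr

/-- Singular value shrinkage (Cai, Candès, Shen 2010): if `X = U·Σ·Vᵀ` is an SVD
(`U`, `V` orthogonal, `Σ` nonnegative and supported on the diagonal), then
`W = U·(Σ − (λ/2)·I)_+·Vᵀ` is the unique minimizer of
`W ↦ ‖W − X‖_F² + λ·‖W‖_*`. -/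
theorem singular_value_shrinkage {p m : ℕ} (lam : ℝ) (hlam : 0 < lam)
    (X : Matrix (Fin p) (Fin m) ℝ)
    (U : Matrix (Fin p) (Fin p) ℝ) (V : Matrix (Fin m) (Fin m) ℝ)
    (S : Matrix (Fin p) (Fin m) ℝ)
    (hU : Uᵀ * U = 1) (hV : Vᵀ * V = 1)
    (hSdiag : ∀ (i : Fin p) (j : Fin m), (i : ℕ) ≠ (j : ℕ) → S i j = 0)
    (hSnn : ∀ (i : Fin p) (j : Fin m), 0 ≤ S i j)
    (hX : X = U * S * Vᵀ)
    (W : Matrix (Fin p) (Fin m) ℝ)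
    (hW : W = U * (Matrix.of fun i j => max (S i j - lam / 2) 0) * Vᵀ) :
    (∀ Z : Matrix (Fin p) (Fin m) ℝ,
        frobNormSq (W - X) + lam * nuclearNorm W ≤
          frobNormSq (Z - X) + lam * nuclearNorm Z) ∧
    (∀ Z : Matrix (Fin p) (Fin m) ℝ,
        (∀ Y : Matrix (Fin p) (Fin m) ℝ,
          frobNormSq (Z - X) + lam * nuclearNorm Z ≤
            frobNormSq (Y - X) + lam * nuclearNorm Y) → Z = W) := by
  have growth : ∀ Z, frobNormSq (W - X) + lam * nuclearNorm W + frobNormSq (Z - W) ≤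
      frobNormSq (Z - X) + lam * nuclearNorm Z := by
    intro Z
    obtain ⟨A, rfl⟩ : ∃ A, Z = U * A * Vᵀ := ⟨Uᵀ * Z * V, by
      simp only [Matrix.mul_assoc, mul_eq_one_comm.mp hV, Matrix.mul_one,
        ← Matrix.mul_assoc U, mul_eq_one_comm.mp hU, Matrix.one_mul]⟩
    subst hX hW
    simp only [← Matrix.mul_sub, ← Matrix.sub_mul, frobNormSq_mul_mul_transpose _ U V hU hV,
      nuclearNorm_mul_mul_transpose _ U V hU hV]
    exact shrink_quadratic_growth_of_isRectDiag hlam hSdiag hSnn A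
  refine ⟨fun Z => by linarith [growth Z, frobNormSq_nonneg (Z - W)], fun Z hZ => ?_⟩
  have hZW : frobNormSq (Z - W) = 0 :=
    le_antisymm (by linarith [growth Z, hZ W]) (frobNormSq_nonneg _)
  exact sub_eq_zero.mp (frobNormSq_eq_zero_iff.mp hZW)
end

section
/- Let f : ℝ^d → ℝ be convex, differentiable, and H-smooth, and let the Frank–Wolfe iteration on a compact convex set C with diameter D (in the relevant norm) use step sizes γ_t = 2/(t+2): W^{(t+1)} = (1 − γ_t)·W^{(t)} + γ_t·Z^{(t)} where Z^{(t)} ∈ argmin_{Z ∈ C} ⟨∇f(W^{(t)}), Z⟩. Then f(W^{(t)}) − min_{W ∈ C} f(W) ≤ 2·H·D²/(t+2) for all t ≥ 1. -/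
/-!
Smoothness along the segment from `x` to the oracle point `z`,
together with `⟪∇f x, z - x⟫ ≤ ⟪∇f x, x⋆ - x⟫ ≤ f x⋆ - f x` (optimality of `z`, then convexity),
gives the one-step recursion `e (t+1) ≤ (1 - γ) e t + H γ² D² / 2` for the gap `e t = f (W t) - f x⋆`.
With `γ = 2/(t+2)` the first step kills `e 0`, and the bound `2HD²/(t+2)` propagates by induction
because `(t+1)(t+3) ≤ (t+2)²`.
-/

open scoped RealInnerProductSpace

section FrankWolfe

variable {E : Type*} [NormedAddCommGroup E] [InnerProductSpace ℝ E]

lemma two_div_nat_add_two_mem_Icc (t : ℕ) : 2 / ((t : ℝ) + 2) ∈ Set.Icc (0 : ℝ) 1 := by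
  have ht : (0 : ℝ) < t + 2 := by positivity
  exact ⟨by positivity, by rw [div_le_one ht]; linarith⟩

lemma frankWolfe_iterate_mem {C : Set E} (hC : Convex ℝ C) {W Z : ℕ → E} {γ : ℕ → ℝ}
    (hW0 : W 0 ∈ C) (hZ : ∀ t, Z t ∈ C) (hγ : ∀ t, γ t ∈ Set.Icc (0 : ℝ) 1)
    (hiter : ∀ t, W (t + 1) = (1 - γ t) • W t + γ t • Z t) (t : ℕ) : W t ∈ C := by
  induction t with
  | zero => exact hW0
  | succ n ih =>
    rw [hiter n]
    exact hC ih (hZ n) (sub_nonneg.mpr (hγ n).2) (hγ n).1 (sub_add_cancel 1 (γ n))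

lemma frankWolfe_step_gap_le {f : E → ℝ} {g x y z : E} {H D γ : ℝ} (hH : 0 ≤ H) (hγ : 0 ≤ γ)
    (hconv : f x + ⟪g, y - x⟫ ≤ f y)
    (hsmooth : f ((1 - γ) • x + γ • z) ≤
      f x + ⟪g, (1 - γ) • x + γ • z - x⟫ + H / 2 * ‖(1 - γ) • x + γ • z - x‖ ^ 2)
    (hmin : ⟪g, z⟫ ≤ ⟪g, y⟫) (hzx : ‖z - x‖ ≤ D) :
    f ((1 - γ) • x + γ • z) - f y ≤ (1 - γ) * (f x - f y) + H / 2 * γ ^ 2 * D ^ 2 := by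
  have hdir : (1 - γ) • x + γ • z - x = γ • (z - x) := by module
  have hlin : ⟪g, z - x⟫ ≤ f y - f x := by
    rw [inner_sub_right] at hconv ⊢
    linarith
  have hsq : ‖z - x‖ ^ 2 ≤ D ^ 2 := pow_le_pow_left₀ (norm_nonneg _) hzx 2
  rw [hdir, real_inner_smul_right, norm_smul, mul_pow, Real.norm_eq_abs, sq_abs] at hsmooth
  have hquad : H / 2 * (γ ^ 2 * ‖z - x‖ ^ 2) ≤ H / 2 * γ ^ 2 * D ^ 2 := by
    rw [← mul_assoc]
    exact mul_le_mul_of_nonneg_left hsq (by positivity)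
  nlinarith [mul_le_mul_of_nonneg_left hlin hγ]

lemma le_two_mul_div_of_frankWolfe_recursion {e : ℕ → ℝ} {K : ℝ} (hK : 0 ≤ K)
    (hrec : ∀ t : ℕ,
      e (t + 1) ≤ (1 - 2 / ((t : ℝ) + 2)) * e t + K / 2 * (2 / ((t : ℝ) + 2)) ^ 2) :
    ∀ t : ℕ, 1 ≤ t → e t ≤ 2 * K / ((t : ℝ) + 2) := by
  intro t ht
  induction t, ht using Nat.le_induction with
  | base =>
    have h1 := hrec 0
    norm_num at h1 ⊢
    linarith
  | succ n _ ih =>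
    have hfac : 0 ≤ 1 - 2 / ((n : ℝ) + 2) := sub_nonneg.mpr (two_div_nat_add_two_mem_Icc n).2
    have hclosed :
        (1 - 2 / ((n : ℝ) + 2)) * (2 * K / ((n : ℝ) + 2)) + K / 2 * (2 / ((n : ℝ) + 2)) ^ 2 =
          2 * K * ((n : ℝ) + 1) / ((n : ℝ) + 2) ^ 2 := by
      field_simp; ring
    have hshrink : 2 * K * ((n : ℝ) + 1) / ((n : ℝ) + 2) ^ 2 ≤ 2 * K / ((n : ℝ) + 3) := by
      rw [div_le_div_iff₀ (by positivity) (by positivity)]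
      nlinarith
    calc e (n + 1)
        ≤ (1 - 2 / ((n : ℝ) + 2)) * e n + K / 2 * (2 / ((n : ℝ) + 2)) ^ 2 := hrec n
      _ ≤ (1 - 2 / ((n : ℝ) + 2)) * (2 * K / ((n : ℝ) + 2)) +
            K / 2 * (2 / ((n : ℝ) + 2)) ^ 2 := by gcongr
      _ ≤ 2 * K / (((n + 1 : ℕ) : ℝ) + 2) := by
          rw [hclosed, show ((n + 1 : ℕ) : ℝ) + 2 = n + 3 by push_cast; ring]
          exact hshrink

end FrankWolfe

theorem frank_wolfe_convergence_general {d : ℕ} (H D : ℝ) (hH : 0 ≤ H)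
    (f : EuclideanSpace ℝ (Fin d) → ℝ)
    (gradf : EuclideanSpace ℝ (Fin d) → EuclideanSpace ℝ (Fin d))
    (hconv : ∀ x y, f x + ⟪gradf x, y - x⟫ ≤ f y)
    (hsmooth : ∀ x y, f y ≤ f x + ⟪gradf x, y - x⟫ + H / 2 * ‖y - x‖ ^ 2)
    (C : Set (EuclideanSpace ℝ (Fin d)))
    (hCconvex : Convex ℝ C)
    (hdiam : ∀ x ∈ C, ∀ y ∈ C, ‖x - y‖ ≤ D)
    (W Z : ℕ → EuclideanSpace ℝ (Fin d))
    (hW0 : W 0 ∈ C)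
    (hZ : ∀ t, Z t ∈ C ∧ ∀ Y ∈ C, ⟪gradf (W t), Z t⟫ ≤ ⟪gradf (W t), Y⟫)
    (hiter : ∀ t : ℕ,
      W (t + 1) = (1 - 2 / ((t : ℝ) + 2)) • W t + (2 / ((t : ℝ) + 2)) • Z t) :
    ∀ t : ℕ, 1 ≤ t → ∀ Wopt ∈ C, f (W t) - f Wopt ≤ 2 * H * D ^ 2 / ((t : ℝ) + 2) := by
  intro t ht Wopt hopt
  have hWC : ∀ s, W s ∈ C := frankWolfe_iterate_mem hCconvex hW0 (fun s => (hZ s).1)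
    two_div_nat_add_two_mem_Icc hiter
  have hrec (s : ℕ) : f (W (s + 1)) - f Wopt ≤
      (1 - 2 / ((s : ℝ) + 2)) * (f (W s) - f Wopt) + H * D ^ 2 / 2 * (2 / ((s : ℝ) + 2)) ^ 2 := by
    rw [hiter s]
    convert frankWolfe_step_gap_le hH (two_div_nat_add_two_mem_Icc s).1 (hconv (W s) Wopt)
      (hsmooth _ _) ((hZ s).2 Wopt hopt) (hdiam _ (hZ s).1 _ (hWC s)) using 2
    ring
  have := le_two_mul_div_of_frankWolfe_recursion (e := fun s => f (W s) - f Wopt)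
    (mul_nonneg hH (sq_nonneg D)) hrec t ht
  rwa [← mul_assoc] at this

/-- Frank–Wolfe convergence with step sizes `γ_t = 2/(t+2)`: for a convex `H`-smooth
`f` on a compact convex set `C ⊆ ℝ^d` of diameter `D`,
`f(W^{(t)}) − min_{W ∈ C} f(W) ≤ 2HD²/(t+2)` for all `t ≥ 1`. -/
theorem frank_wolfe_convergence {d : ℕ} (H D : ℝ) (hH : 0 ≤ H)
    (f : EuclideanSpace ℝ (Fin d) → ℝ)
    (gradf : EuclideanSpace ℝ (Fin d) → EuclideanSpace ℝ (Fin d))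
    (hconv : ∀ x y, f x + ⟪gradf x, y - x⟫ ≤ f y)
    (hsmooth : ∀ x y, f y ≤ f x + ⟪gradf x, y - x⟫ + H / 2 * ‖y - x‖ ^ 2)
    (C : Set (EuclideanSpace ℝ (Fin d)))
    (hCcompact : IsCompact C) (hCconvex : Convex ℝ C)
    (hdiam : ∀ x ∈ C, ∀ y ∈ C, ‖x - y‖ ≤ D)
    (W Z : ℕ → EuclideanSpace ℝ (Fin d))
    (hW0 : W 0 ∈ C)
    (hZ : ∀ t, Z t ∈ C ∧ ∀ Y ∈ C, ⟪gradf (W t), Z t⟫ ≤ ⟪gradf (W t), Y⟫)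
    (hiter : ∀ t : ℕ,
      W (t + 1) = (1 - 2 / ((t : ℝ) + 2)) • W t + (2 / ((t : ℝ) + 2)) • Z t) :
    ∀ t : ℕ, 1 ≤ t → ∀ Wopt ∈ C, f (W t) - f Wopt ≤ 2 * H * D ^ 2 / ((t : ℝ) + 2) :=
  frank_wolfe_convergence_general H D hH f gradf hconv hsmooth C hCconvex hdiam W Z hW0 hZ hiter
end
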